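/- If simplicial complexes L and N have the same strong homotopy type, then TC_n(L) = TC_n(N), where TC_n(L) = SD(p₁,…,p_n) for the n projection maps p_i : L^n → L from the categorical product. -/

import Mathlib

noncomputable section

/-- An abstract simplicial complex on a vertex type `V`. -/
structure ASC (V : Type) where
  faces : Set (Finset V)
  nonempty_of_mem : ∀ ⦃σ⦄, σ ∈ faces → σ.Nonempty
  down_closed : ∀ ⦃σ⦄, σ ∈ faces → ∀ ⦃τ⦄, τ ⊆ σ → τ.Nonempty → τ ∈ faces

/-- A simplicial map between abstract simplicial complexes. -/
structure SMap {V W : Type} [DecidableEq W] (K : ASC V) (L : ASC W) where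
  toFun : V → W
  map_faces : ∀ ⦃σ⦄, σ ∈ K.faces → σ.image toFun ∈ L.faces

/-- The identity simplicial map. -/
def SMap.id {V : Type} [DecidableEq V] (K : ASC V) : SMap K K :=
  ⟨fun v => v, fun σ hσ => by simpa using hσ⟩

/-- Composition of simplicial maps. -/
def SMap.comp {U V W : Type} [DecidableEq V] [DecidableEq W]
    {K : ASC U} {L : ASC V} {M : ASC W}
    (g : SMap L M) (f : SMap K L) : SMap K M :=
  ⟨g.toFun ∘ f.toFun, fun σ hσ => by
    rw [show σ.image (g.toFun ∘ f.toFun) = (σ.image f.toFun).image g.toFun by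
      simp [Finset.image_image]]
    exact g.map_faces (f.map_faces hσ)⟩

/-- Two simplicial maps are contiguous if the union of the images of every
simplex is a simplex of the codomain. -/
def Contiguous {V W : Type} [DecidableEq W] {K : ASC V} {L : ASC W}
    (f g : SMap K L) : Prop :=
  ∀ ⦃σ⦄, σ ∈ K.faces → σ.image f.toFun ∪ σ.image g.toFun ∈ L.faces

/-- Two simplicial maps are in the same contiguity class if they are joined by
a finite chain of pairwise contiguous simplicial maps. -/
def ContigClass {V W : Type} [DecidableEq W] {K : ASC V} {L : ASC W}
    (f g : SMap K L) : Prop :=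
  Relation.ReflTransGen Contiguous f g

/-- `N` is a subcomplex of `K`. -/
def IsSubcomplex {V : Type} (N K : ASC V) : Prop :=
  N.faces ⊆ K.faces

/-- Restriction of a simplicial map to a subcomplex. -/
def SMap.restrict {V W : Type} [DecidableEq W] {N K : ASC V} {L : ASC W}
    (h : IsSubcomplex N K) (f : SMap K L) : SMap N L :=
  ⟨f.toFun, fun _ hσ => f.map_faces (h hσ)⟩

/-- `SDcover φ n` : the domain is covered by `n+1` subcomplexes on each of which
all restrictions of the maps `φ i` are pairwise in the same contiguity class. -/
def SDcover {V W : Type} [DecidableEq W] {K : ASC V} {L : ASC W} {m : ℕ}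
    (φ : Fin m → SMap K L) (n : ℕ) : Prop :=
  ∃ (Ls : Fin (n + 1) → ASC V) (h : ∀ k, IsSubcomplex (Ls k) K),
    (∀ σ ∈ K.faces, ∃ k, σ ∈ (Ls k).faces) ∧
    ∀ k i j, ContigClass (SMap.restrict (h k) (φ i)) (SMap.restrict (h k) (φ j))

/-- The higher contiguity distance `SD(φ₁, …, φ_m)` as a value in `ℕ∞`. -/
def SD {V W : Type} [DecidableEq W] {K : ASC V} {L : ASC W} {m : ℕ}
    (φ : Fin m → SMap K L) : ℕ∞ :=
  sInf {N : ℕ∞ | ∃ n : ℕ, N = n ∧ SDcover φ n}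

/-- The `n`-fold categorical power of a simplicial complex. -/
def ASC.pow {V : Type} [DecidableEq V] (K : ASC V) (n : ℕ) : ASC (Fin n → V) where
  faces := {σ | σ.Nonempty ∧ ∀ i, σ.image (fun v => v i) ∈ K.faces}
  nonempty_of_mem := fun _ hσ => hσ.1
  down_closed := fun σ hσ τ hτσ hτ =>
    ⟨hτ, fun i => K.down_closed (hσ.2 i)
      (Finset.image_subset_image (f := fun v => v i) hτσ) (hτ.image _)⟩

/-- The `i`-th projection from the `n`-fold categorical power. -/
def ASC.proj {V : Type} [DecidableEq V] (K : ASC V) (n : ℕ) (i : Fin n) :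
    SMap (K.pow n) K :=
  ⟨fun v => v i, fun _ hσ => hσ.2 i⟩

/-- The power of a simplicial map. -/
def SMap.pow {V W : Type} [DecidableEq V] [DecidableEq W] {K : ASC V} {L : ASC W}
    (f : SMap K L) (n : ℕ) : SMap (K.pow n) (L.pow n) :=
  ⟨fun v i => f.toFun (v i), fun σ hσ => by
    obtain ⟨h1, h2⟩ := hσ
    refine ⟨h1.image _, fun i => ?_⟩
    have hf := f.map_faces (h2 i)
    rw [Finset.image_image] at hf ⊢
    exact hf⟩

/-- The higher discrete topological complexity `TC_n(K)`. -/
def TCn {V : Type} [DecidableEq V] (K : ASC V) (n : ℕ) : ℕ∞ :=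
  SD (fun i : Fin n => K.proj n i)

/-- The higher discrete topological complexity of a simplicial map. -/
def TCnMap {V W : Type} [DecidableEq V] [DecidableEq W] {K : ASC V} {L : ASC W}
    (φ : SMap K L) (n : ℕ) : ℕ∞ :=
  SD (fun i : Fin n => φ.comp (K.proj n i))

/-- The binary categorical product of two simplicial complexes. -/
def ASC.prod {V W : Type} [DecidableEq V] [DecidableEq W]
    (K : ASC V) (L : ASC W) : ASC (V × W) where
  faces := {σ | σ.Nonempty ∧ σ.image Prod.fst ∈ K.faces ∧ σ.image Prod.snd ∈ L.faces}
  nonempty_of_mem := fun _ hσ => hσ.1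
  down_closed := fun σ hσ τ hτσ hτ =>
    ⟨hτ, K.down_closed hσ.2.1 (Finset.image_subset_image hτσ) (hτ.image _),
      L.down_closed hσ.2.2 (Finset.image_subset_image hτσ) (hτ.image _)⟩

/-- The path complex `I_m` : vertices `0, …, m`, maximal simplices `{i, i+1}`. -/
def pathComplex (m : ℕ) : ASC (Fin (m + 1)) where
  faces := {σ | σ.Nonempty ∧ ∃ i : ℕ, ∀ j ∈ σ, (j : ℕ) = i ∨ (j : ℕ) = i + 1}
  nonempty_of_mem := fun _ hσ => hσ.1
  down_closed := fun _ hσ _ hτσ hτ =>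
    ⟨hτ, hσ.2.imp fun _ h => fun j hj => h j (hτσ hj)⟩

/-- Two simplicial complexes have the same strong homotopy type. -/
def StrongHomotopyType {V W : Type} [DecidableEq V] [DecidableEq W]
    (K : ASC V) (L : ASC W) : Prop :=
  ∃ (f : SMap K L) (g : SMap L K),
    ContigClass (g.comp f) (SMap.id K) ∧ ContigClass (f.comp g) (SMap.id L)

/-- The one-point simplicial complex. -/
def ptASC : ASC Unit where
  faces := {σ | σ.Nonempty}
  nonempty_of_mem := fun _ hσ => hσ
  down_closed := fun _ _ _ _ hτ => hτ

/-- A simplicial complex is strongly collapsible if it has the strong homotopy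
type of a point. -/
def StronglyCollapsible {V : Type} [DecidableEq V] (K : ASC V) : Prop :=
  StrongHomotopyType K ptASC

/-- The inclusion `N → N × I_m` at level `0`. -/
def inclZero {V : Type} [DecidableEq V] (N : ASC V) (m : ℕ) :
    SMap N (N.prod (pathComplex m)) :=
  ⟨fun v => (v, 0), fun σ hσ => by
    refine ⟨(N.nonempty_of_mem hσ).image _, ?_, ?_⟩
    · rw [Finset.image_image, show (Prod.fst ∘ fun v : V => (v, (0 : Fin (m + 1))))
        = fun v => v from rfl, Finset.image_id']
      exact hσ
    · rw [Finset.image_image]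
      refine ⟨(N.nonempty_of_mem hσ).image _, 0, fun j hj => ?_⟩
      simp only [Finset.mem_image, Function.comp] at hj
      obtain ⟨v, -, rfl⟩ := hj
      simp⟩

/-- A simplicial finite-fibration : the homotopy lifting property with respect
to simplicial homotopies `N × I_m → L'` with `N` finite. -/
def IsFiniteFibration {V W : Type} [DecidableEq V] [DecidableEq W]
    {K : ASC V} {L : ASC W} (φ : SMap K L) : Prop :=
  ∀ (U : Type) [Fintype U] [DecidableEq U] (N : ASC U) (m : ℕ) (g : SMap N K)
    (G : SMap (N.prod (pathComplex m)) L),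
    (∀ v, G.toFun (v, 0) = φ.toFun (g.toFun v)) →
    ∃ Gt : SMap (N.prod (pathComplex m)) K,
      (∀ v, Gt.toFun (v, 0) = g.toFun v) ∧ (∀ x, φ.toFun (Gt.toFun x) = G.toFun x)

/-- The constant simplicial map at a vertex `v₀` of `L`. -/
def constMap {V W : Type} [DecidableEq W] (K : ASC V) {L : ASC W} {v₀ : W}
    (hv₀ : {v₀} ∈ L.faces) : SMap K L :=
  ⟨fun _ => v₀, fun σ hσ => by
    have hsub : σ.image (fun _ => v₀) ⊆ {v₀} := by
      intro x hx
      simp only [Finset.mem_image] at hx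
      obtain ⟨v, -, rfl⟩ := hx
      simp
    exact L.down_closed hv₀ hsub ((K.nonempty_of_mem hσ).image _)⟩

/-- A simplicial map is a strong equivalence if it admits an inverse up to
contiguity class. -/
def IsStrongEquiv {V W : Type} [DecidableEq V] [DecidableEq W]
    {K : ASC V} {L : ASC W} (f : SMap K L) : Prop :=
  ∃ g : SMap L K,
    ContigClass (g.comp f) (SMap.id K) ∧ ContigClass (f.comp g) (SMap.id L)

/-! If `g ∘ f ∼ 1_L`, an SD-cover of `N^n` pulls back along `f^n` to a cover of `L^n` on whose
pieces the maps `g ∘ pᵢ ∘ fⁿ = (g ∘ f) ∘ pᵢ` are pairwise in one contiguity class, and these lie in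
the classes of the projections `pᵢ` of `L`. Hence `TC_n L ≤ TC_n N`, and symmetrically. -/

section Contiguity

variable {U V W X : Type}

theorem Contiguous.symm [DecidableEq W] {K : ASC V} {L : ASC W} {f g : SMap K L}
    (h : Contiguous f g) : Contiguous g f := fun _ hσ => by
  rw [Finset.union_comm]
  exact h hσ

theorem Contiguous.restrict [DecidableEq W] {N K : ASC V} {L : ASC W} {f g : SMap K L}
    (h : Contiguous f g) (hN : IsSubcomplex N K) :
    Contiguous (f.restrict hN) (g.restrict hN) :=
  fun _ hσ => h (hN hσ)

theorem Contiguous.precomp [DecidableEq V] [DecidableEq W]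
    {K' : ASC U} {K : ASC V} {L : ASC W} {f g : SMap K L}
    (h : Contiguous f g) (e : SMap K' K) : Contiguous (f.comp e) (g.comp e) := fun σ hσ => by
  simpa only [SMap.comp, ← Finset.image_image] using h (e.map_faces hσ)

theorem Contiguous.postcomp [DecidableEq W] [DecidableEq X]
    {K : ASC V} {L : ASC W} {M : ASC X} {f g : SMap K L}
    (h : Contiguous f g) (e : SMap L M) : Contiguous (e.comp f) (e.comp g) := fun σ hσ => by
  simpa only [SMap.comp, ← Finset.image_image, ← Finset.image_union]
    using e.map_faces (h hσ)

theorem ContigClass.symm [DecidableEq W] {K : ASC V} {L : ASC W} {f g : SMap K L}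
    (h : ContigClass f g) : ContigClass g f :=
  Relation.ReflTransGen.mono (fun _ _ hc => Contiguous.symm hc) _ _
    (Relation.ReflTransGen.swap _ _ h)

theorem ContigClass.trans [DecidableEq W] {K : ASC V} {L : ASC W} {f g h : SMap K L}
    (hfg : ContigClass f g) (hgh : ContigClass g h) : ContigClass f h :=
  Relation.ReflTransGen.trans hfg hgh

theorem ContigClass.restrict [DecidableEq W] {N K : ASC V} {L : ASC W} {f g : SMap K L}
    (h : ContigClass f g) (hN : IsSubcomplex N K) :
    ContigClass (f.restrict hN) (g.restrict hN) :=
  Relation.ReflTransGen.lift _ (fun _ _ hc => hc.restrict hN) _ _ h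

theorem ContigClass.precomp [DecidableEq V] [DecidableEq W]
    {K' : ASC U} {K : ASC V} {L : ASC W} {f g : SMap K L}
    (h : ContigClass f g) (e : SMap K' K) : ContigClass (f.comp e) (g.comp e) :=
  Relation.ReflTransGen.lift (p := Contiguous) (SMap.comp · e) (fun _ _ hc => hc.precomp e) _ _ h

theorem ContigClass.postcomp [DecidableEq W] [DecidableEq X]
    {K : ASC V} {L : ASC W} {M : ASC X} {f g : SMap K L}
    (h : ContigClass f g) (e : SMap L M) : ContigClass (e.comp f) (e.comp g) :=
  Relation.ReflTransGen.lift (p := Contiguous) (e.comp ·) (fun _ _ hc => hc.postcomp e) _ _ h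

end Contiguity

section SDcover

variable {U V W X : Type} {m n : ℕ}

def ASC.preimage [DecidableEq W] (K : ASC V) (φ : V → W) (M : ASC W) : ASC V where
  faces := {σ | σ ∈ K.faces ∧ σ.image φ ∈ M.faces}
  nonempty_of_mem := fun _ hσ => K.nonempty_of_mem hσ.1
  down_closed := fun _ hσ _ hτσ hτ =>
    ⟨K.down_closed hσ.1 hτσ hτ, M.down_closed hσ.2 (Finset.image_subset_image hτσ) (hτ.image _)⟩

theorem ASC.preimage_isSubcomplex [DecidableEq W] (K : ASC V) (φ : V → W) (M : ASC W) :
    IsSubcomplex (K.preimage φ M) K :=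
  fun _ hσ => hσ.1

def SMap.restrictPreimage [DecidableEq V] {K' : ASC U} {K : ASC V} (e : SMap K' K)
    (M : ASC V) : SMap (K'.preimage e.toFun M) M :=
  ⟨e.toFun, fun _ hσ => hσ.2⟩

theorem SDcover.precomp [DecidableEq V] [DecidableEq W] {K' : ASC U} {K : ASC V} {L : ASC W}
    {φ : Fin m → SMap K L} (hφ : SDcover φ n) (e : SMap K' K) :
    SDcover (fun i => (φ i).comp e) n := by
  obtain ⟨Ks, hKs, hcover, hcontig⟩ := hφ
  refine ⟨fun k => K'.preimage e.toFun (Ks k), fun k => K'.preimage_isSubcomplex _ _,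
    fun σ hσ => ?_, fun k i j => (hcontig k i j).precomp (e.restrictPreimage (Ks k))⟩
  obtain ⟨k, hk⟩ := hcover _ (e.map_faces hσ)
  exact ⟨k, hσ, hk⟩

theorem SDcover.postcomp [DecidableEq W] [DecidableEq X] {K : ASC V} {L : ASC W} {M : ASC X}
    {φ : Fin m → SMap K L} (hφ : SDcover φ n) (g : SMap L M) :
    SDcover (fun i => g.comp (φ i)) n := by
  obtain ⟨Ks, hKs, hcover, hcontig⟩ := hφ
  exact ⟨Ks, hKs, hcover, fun k i j => (hcontig k i j).postcomp g⟩

theorem SDcover.of_contigClass [DecidableEq W] {K : ASC V} {L : ASC W}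
    {φ ψ : Fin m → SMap K L} (hφ : SDcover φ n) (hφψ : ∀ i, ContigClass (φ i) (ψ i)) :
    SDcover ψ n := by
  obtain ⟨Ks, hKs, hcover, hcontig⟩ := hφ
  exact ⟨Ks, hKs, hcover, fun k i j =>
    (((hφψ i).restrict (hKs k)).symm.trans (hcontig k i j)).trans ((hφψ j).restrict (hKs k))⟩

theorem SD_le_SD_of_forall_SDcover [DecidableEq W] [DecidableEq X] {m' : ℕ}
    {K : ASC U} {L : ASC W} {K' : ASC V} {L' : ASC X}
    {φ : Fin m → SMap K L} {ψ : Fin m' → SMap K' L'} (h : ∀ n, SDcover ψ n → SDcover φ n) :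
    SD φ ≤ SD ψ :=
  sInf_le_sInf fun _ ⟨n, hN, hn⟩ => ⟨n, hN, h n hn⟩

end SDcover

theorem TCn_le_of_comp_contigClass_id {V W : Type} [DecidableEq V] [DecidableEq W]
    {L : ASC V} {N : ASC W} (f : SMap L N) (g : SMap N L)
    (hgf : ContigClass (g.comp f) (SMap.id L)) (n : ℕ) : TCn L n ≤ TCn N n :=
  SD_le_SD_of_forall_SDcover fun _ hk =>
    ((hk.precomp (f.pow n)).postcomp g).of_contigClass fun i => hgf.precomp (L.proj n i)

/-- `TC_n` is an invariant of strong homotopy type. -/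
theorem TCn_strong_homotopy_invariant
    {V W : Type} [DecidableEq V] [DecidableEq W] {L : ASC V} {N : ASC W}
    (h : StrongHomotopyType L N) (n : ℕ) :
    TCn L n = TCn N n := by
  obtain ⟨f, g, hgf, hfg⟩ := h
  exact le_antisymm (TCn_le_of_comp_contigClass_id f g hgf n)
    (TCn_le_of_comp_contigClass_id g f hfg n)
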